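/- arXiv:1907.00861 — 2 statements merged into one kernel-verified Lean document; each statement's English description precedes it below -/
import Mathlib

section
/- In a (6,4) net, no set Λ of lines with parallax (3,3,3,0) or (3,3,3,2) (up to permutation of the parallel classes) satisfies c(Λ) = 0. -/
/-- A `(6,4)` net on a point type `P`: 36 points, lines of size 6 indexed by
4 parallel classes of 6 lines each; each parallel class partitions the point set,
and two lines from different parallel classes meet in exactly one point. -/
structure Net64 (P : Type) [Fintype P] [DecidableEq P] where
  line : Fin 4 → Fin 6 → Finset P
  card_points : Fintype.card P = 36
  line_card : ∀ i j, (line i j).card = 6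
  partition : ∀ (i : Fin 4) (p : P), ∃! j : Fin 6, p ∈ line i j
  meet : ∀ (i i' : Fin 4) (j j' : Fin 6), i ≠ i' → (line i j ∩ line i' j').card = 1

/-- The characteristic function `v^s` of a finite set `s`, with values in `F₂`. -/
def chi {P : Type} [DecidableEq P] (s : Finset P) : P → ZMod 2 :=
  fun p => if p ∈ s then 1 else 0

/-- `c(Λ)`: the `F₂`-sum of the characteristic functions of a set of lines of the net,
a set of lines being given by the finite set of its (class, index) pairs. -/
def Net64.cSum {P : Type} [Fintype P] [DecidableEq P] (N : Net64 P)
    (Λ : Finset (Fin 4 × Fin 6)) : P → ZMod 2 :=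
  ∑ x ∈ Λ, chi (N.line x.1 x.2)

/-- `lᵢ = |Λ ∩ Πᵢ|`: the number of lines of `Λ` in the `i`-th parallel class. -/
def lcount (Λ : Finset (Fin 4 × Fin 6)) (i : Fin 4) : ℕ :=
  (Λ.filter fun x => x.1 = i).card

/-- `pⱼ`: the number of points of the net lying on exactly `j` lines of `Λ`. -/
def Net64.pcount {P : Type} [Fintype P] [DecidableEq P] (N : Net64 P)
    (Λ : Finset (Fin 4 × Fin 6)) (j : ℕ) : ℕ :=
  (Finset.univ.filter fun p : P => (Λ.filter fun x => p ∈ N.line x.1 x.2).card = j).card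

/-!
Sum `c(Λ)` over the points of a line `λ ∉ Λ` of the fourth parallel class. Over `F₂` this counts
`|λ ∩ μ|` for `μ ∈ Λ`, which is `1` for the nine lines of the other three classes and `0` for
the lines of the fourth class, parallel to `λ`. The sum is therefore `9 = 1`, so `c(Λ) ≠ 0`;
a line `λ` exists because the fourth class contributes at most two of its six lines to `Λ`.
-/

open Finset

lemma sum_chi {P : Type} [DecidableEq P] (s t : Finset P) :
    ∑ p ∈ s, chi t p = (#(s ∩ t) : ZMod 2) := by
  unfold chi
  rw [sum_ite_mem, sum_const, nsmul_eq_mul, mul_one]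

lemma exists_notMem_of_lcount_lt {Λ : Finset (Fin 4 × Fin 6)} {i : Fin 4}
    (h : lcount Λ i < 6) : ∃ j, (i, j) ∉ Λ := by
  by_contra! hall
  have hsub : univ.map ⟨Prod.mk i, Prod.mk_right_injective i⟩ ⊆ Λ.filter (·.1 = i) := by
    intro x hx
    obtain ⟨j, -, rfl⟩ := mem_map.mp hx
    exact mem_filter.mpr ⟨hall j, rfl⟩
  have hle := card_le_card hsub
  rw [card_map, card_univ, Fintype.card_fin] at hle
  exact hle.not_gt h

lemma card_filter_fst_ne_add_lcount (Λ : Finset (Fin 4 × Fin 6)) (i : Fin 4) :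
    #(Λ.filter (·.1 ≠ i)) + lcount Λ i = ∑ i', lcount Λ i' := by
  rw [lcount, add_comm, card_filter_add_card_filter_not]
  exact card_eq_sum_card_fiberwise fun x _ => mem_univ x.1

namespace Net64

variable {P : Type} [Fintype P] [DecidableEq P] (N : Net64 P)

lemma disjoint_line {i : Fin 4} {j j' : Fin 6} (h : j ≠ j') :
    Disjoint (N.line i j) (N.line i j') := by
  rw [Finset.disjoint_left]
  intro p hp hp'
  exact h ((N.partition i p).unique hp hp')

lemma card_line_inter_line {i i' : Fin 4} {j j' : Fin 6} (h : (i, j) ≠ (i', j')) :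
    #(N.line i j ∩ N.line i' j') = if i = i' then 0 else 1 := by
  split_ifs with hi
  · subst hi
    exact card_eq_zero.mpr (N.disjoint_line fun hj => h (by rw [hj])).eq_bot
  · exact N.meet i i' j j' hi

lemma sum_cSum_line {Λ : Finset (Fin 4 × Fin 6)} {i : Fin 4} {j : Fin 6} (hj : (i, j) ∉ Λ) :
    ∑ p ∈ N.line i j, N.cSum Λ p = #(Λ.filter (·.1 ≠ i)) := by
  have hterm : ∀ x ∈ Λ, (#(N.line i j ∩ N.line x.1 x.2) : ZMod 2) = if x.1 ≠ i then 1 else 0 := by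
    intro x hx
    rw [N.card_line_inter_line (ne_of_mem_of_not_mem hx hj).symm]
    split_ifs <;> simp_all
  simp only [cSum, Finset.sum_apply]
  rw [sum_comm, sum_congr rfl fun x _ => sum_chi _ _, sum_congr rfl hterm, sum_boole]

lemma even_card_filter_fst_ne {Λ : Finset (Fin 4 × Fin 6)} (hc : N.cSum Λ = 0) {i : Fin 4}
    {j : Fin 6} (hj : (i, j) ∉ Λ) : Even #(Λ.filter (·.1 ≠ i)) := by
  rw [← ZMod.natCast_eq_zero_iff_even, ← N.sum_cSum_line hj, hc]
  exact sum_const_zero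

end Net64

/-- In a `(6,4)` net, no set `Λ` of lines with parallax `(3,3,3,0)` or `(3,3,3,2)`
(up to permutation of the parallel classes) satisfies `c(Λ) = 0`. -/
theorem net64_parallax_3330_3332 {P : Type} [Fintype P] [DecidableEq P] (N : Net64 P)
    (Λ : Finset (Fin 4 × Fin 6)) (σ : Equiv.Perm (Fin 4))
    (h : (lcount Λ (σ 0), lcount Λ (σ 1), lcount Λ (σ 2), lcount Λ (σ 3)) = (3, 3, 3, 0) ∨
         (lcount Λ (σ 0), lcount Λ (σ 1), lcount Λ (σ 2), lcount Λ (σ 3)) = (3, 3, 3, 2)) :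
    N.cSum Λ ≠ 0 := by
  intro hc
  have hl : lcount Λ (σ 0) = 3 ∧ lcount Λ (σ 1) = 3 ∧ lcount Λ (σ 2) = 3 ∧
      lcount Λ (σ 3) ≤ 2 := by
    rcases h with h | h <;> simp only [Prod.mk.injEq] at h <;> omega
  obtain ⟨j, hj⟩ := exists_notMem_of_lcount_lt (Λ := Λ) (i := σ 3) (by omega)
  have htotal : ∑ i, lcount Λ i = ∑ i, lcount Λ (σ i) := (Equiv.sum_comp σ _).symm
  rw [← card_filter_fst_ne_add_lcount Λ (σ 3), Fin.sum_univ_four] at htotal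
  have hnine : #(Λ.filter (·.1 ≠ σ 3)) = 9 := by omega
  have hodd : ¬Even #(Λ.filter (·.1 ≠ σ 3)) := by rw [hnine]; decide
  exact hodd (N.even_card_filter_fst_ne hc hj)
end

section
/- In a (6,4) net, if Λ is a set of lines with parallax (2,2,2,2) and c(Λ) = 0, then Λ has no 1-points, no 3-points, and no 4-points, and exactly 24 points of the net are 2-points of Λ (each of the 24 points covered by Λ lies on exactly two lines of Λ). -/
/-!
Let `d p` be the number of lines of `Λ` through `p`. Since `c(Λ) = 0`, every `d p` is even.
Double counting incidences gives `∑ d = 6 |Λ| = 48`, and counting pairs of lines through a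
point gives `∑ d² = ∑_{λ, μ ∈ Λ} |λ ∩ μ| = 96 = 2 ∑ d`: each of the 8 diagonal pairs
contributes 6, and each of the `8 · 6` ordered pairs of lines from different classes
contributes 1. For even `d` we have `d² ≥ 2d` with equality only for `d ∈ {0, 2}`, so every
point is a 0-point or a 2-point, and there are `48 / 2 = 24` of the latter.
-/

open Finset

theorem Nat.eq_zero_or_eq_two_of_sum_sq_eq {ι : Type*} (s : Finset ι) (d : ι → ℕ)
    (heven : ∀ i ∈ s, Even (d i)) (hsum : ∑ i ∈ s, d i ^ 2 = ∑ i ∈ s, 2 * d i) :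
    ∀ i ∈ s, d i = 0 ∨ d i = 2 := by
  have hle : ∀ i ∈ s, 2 * d i ≤ d i ^ 2 := by
    intro i hi
    obtain ⟨k, hk⟩ := heven i hi
    rw [hk]
    nlinarith [Nat.le_self_pow two_ne_zero k]
  intro i hi
  have hsq : d i * d i = d i * 2 := by
    rw [← sq, mul_comm]; exact ((sum_eq_sum_iff_of_le hle).mp hsum.symm i hi).symm
  rcases Nat.eq_zero_or_pos (d i) with h0 | hpos
  · exact .inl h0
  · exact .inr (Nat.eq_of_mul_eq_mul_left hpos hsq)

theorem card_eq_sum_lcount (Λ : Finset (Fin 4 × Fin 6)) : #Λ = ∑ i, lcount Λ i :=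
  card_eq_sum_card_fiberwise fun x _ => mem_univ x.1

namespace Net64

variable {P : Type} [Fintype P] [DecidableEq P] (N : Net64 P) (Λ : Finset (Fin 4 × Fin 6))

def degree (p : P) : ℕ := #(Λ.filter fun x => p ∈ N.line x.1 x.2)

theorem eq_of_mem_line_of_mem_line {i : Fin 4} {j j' : Fin 6} {p : P}
    (h : p ∈ N.line i j) (h' : p ∈ N.line i j') : j = j' :=
  (N.partition i p).unique h h'

theorem card_inter_line (x y : Fin 4 × Fin 6) :
    #(N.line x.1 x.2 ∩ N.line y.1 y.2) = if x = y then 6 else if x.1 = y.1 then 0 else 1 := by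
  split_ifs with hxy hclass
  · rw [hxy, inter_self, N.line_card]
  · refine card_eq_zero.mpr (eq_empty_of_forall_notMem fun p hp => hxy ?_)
    rw [mem_inter, hclass] at hp
    exact Prod.ext hclass (N.eq_of_mem_line_of_mem_line hp.1 hp.2)
  · exact N.meet _ _ _ _ hclass

theorem cSum_apply (p : P) : N.cSum Λ p = N.degree Λ p := by
  simp only [cSum, Finset.sum_apply, chi, sum_boole, degree]

theorem even_degree_of_cSum_eq_zero (hc : N.cSum Λ = 0) (p : P) : Even (N.degree Λ p) := by
  have := N.cSum_apply Λ p
  rw [hc, Pi.zero_apply, eq_comm, ZMod.natCast_eq_zero_iff] at this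
  exact even_iff_two_dvd.mpr this

theorem degree_eq_sum (p : P) :
    N.degree Λ p = ∑ x ∈ Λ, if p ∈ N.line x.1 x.2 then 1 else 0 := by
  rw [degree, sum_boole, Nat.cast_id]

theorem sum_degree : ∑ p, N.degree Λ p = 6 * #Λ := by
  simp_rw [degree_eq_sum]
  rw [sum_comm]
  simp [N.line_card, mul_comm]

theorem sum_degree_sq :
    ∑ p, N.degree Λ p ^ 2 = ∑ x ∈ Λ, ∑ y ∈ Λ, #(N.line x.1 x.2 ∩ N.line y.1 y.2) := by
  simp_rw [degree_eq_sum, sq, sum_mul_sum]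
  rw [sum_comm]
  refine sum_congr rfl fun x _ => ?_
  rw [sum_comm]
  refine sum_congr rfl fun y _ => ?_
  simp only [boole_mul, ← ite_and, ← mem_inter, sum_boole, filter_mem_eq_inter, univ_inter,
    Nat.cast_id]

theorem sum_card_inter_line_add_lcount {x : Fin 4 × Fin 6} (hx : x ∈ Λ) :
    ∑ y ∈ Λ, #(N.line x.1 x.2 ∩ N.line y.1 y.2) + lcount Λ x.1 = 6 + #Λ := by
  have parallel : ∑ y ∈ Λ with y.1 = x.1, #(N.line x.1 x.2 ∩ N.line y.1 y.2) = 6 := by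
    have hx' : x ∈ Λ.filter (·.1 = x.1) := mem_filter.2 ⟨hx, rfl⟩
    rw [sum_eq_single_of_mem x hx', card_inter_line, if_pos rfl]
    intro y hy hyx
    rw [card_inter_line, if_neg (Ne.symm hyx), if_pos (mem_filter.1 hy).2.symm]
  have transversal : ∑ y ∈ Λ with ¬y.1 = x.1, #(N.line x.1 x.2 ∩ N.line y.1 y.2) =
      #{y ∈ Λ | ¬y.1 = x.1} := by
    rw [card_eq_sum_ones]
    refine sum_congr rfl fun y hy => ?_
    have hxy : ¬x.1 = y.1 := fun h => (mem_filter.1 hy).2 h.symm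
    rw [card_inter_line, if_neg (fun h => hxy (congrArg Prod.fst h)), if_neg hxy]
  rw [← sum_filter_add_sum_filter_not Λ (fun y => y.1 = x.1), parallel, transversal, lcount,
    ← card_filter_add_card_filter_not (s := Λ) (fun y => y.1 = x.1)]
  omega

theorem pcount_eq_zero_of_forall_degree_ne {j : ℕ} (h : ∀ p, N.degree Λ p ≠ j) :
    N.pcount Λ j = 0 :=
  card_eq_zero.mpr (filter_eq_empty_iff.mpr fun p _ => h p)

theorem sum_degree_eq_two_mul_pcount (h : ∀ p, N.degree Λ p = 0 ∨ N.degree Λ p = 2) :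
    ∑ p, N.degree Λ p = 2 * N.pcount Λ 2 := by
  rw [pcount, card_eq_sum_ones, sum_filter, mul_sum]
  refine sum_congr rfl fun p _ => ?_
  rcases h p with hp | hp <;> simp only [degree] at hp ⊢ <;> simp [hp]

end Net64

/-- If `Λ` is a set of lines of a `(6,4)` net with parallax `(2,2,2,2)` and `c(Λ) = 0`,
then `Λ` has no 1-points, no 3-points and no 4-points, and exactly 24 points of the net
are 2-points of `Λ`. -/
theorem net64_parallax_2222_points {P : Type} [Fintype P] [DecidableEq P] (N : Net64 P)
    (Λ : Finset (Fin 4 × Fin 6)) (hl : ∀ i : Fin 4, lcount Λ i = 2)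
    (hc : N.cSum Λ = 0) :
    N.pcount Λ 1 = 0 ∧ N.pcount Λ 3 = 0 ∧ N.pcount Λ 4 = 0 ∧ N.pcount Λ 2 = 24 := by
  have hcard : #Λ = 8 := by simp [card_eq_sum_lcount, hl]
  have hsq : ∑ p, N.degree Λ p ^ 2 = ∑ p, 2 * N.degree Λ p := by
    have hrow : ∀ x ∈ Λ, ∑ y ∈ Λ, #(N.line x.1 x.2 ∩ N.line y.1 y.2) = 12 := fun x hx => by
      have := N.sum_card_inter_line_add_lcount Λ hx
      rw [hl, hcard] at this
      omega
    rw [N.sum_degree_sq, sum_congr rfl hrow, ← mul_sum, N.sum_degree, sum_const, hcard]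
    norm_num
  have hdeg : ∀ p, N.degree Λ p = 0 ∨ N.degree Λ p = 2 := fun p =>
    Nat.eq_zero_or_eq_two_of_sum_sq_eq univ _
      (fun p _ => N.even_degree_of_cSum_eq_zero Λ hc p) hsq p (mem_univ p)
  have hp2 := N.sum_degree_eq_two_mul_pcount Λ hdeg
  rw [N.sum_degree, hcard] at hp2
  refine ⟨?_, ?_, ?_, by omega⟩ <;>
    exact N.pcount_eq_zero_of_forall_degree_ne Λ fun p => by rcases hdeg p with h | h <;> omega
end
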